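/- (Hales–Jewett) For all positive integers t and ℓ there exists N = N(t, ℓ) such that for every alphabet A of size t and every ℓ-coloring of the words A^N, there exists a monochromatic combinatorial line. -/
import Mathlib


/-- The Hales–Jewett theorem: for every alphabet size `t` and number of colors `ℓ` there
is an `N` such that every `ℓ`-coloring of words of length `N` admits a monochromatic
combinatorial line. -/
theorem stmt_8 (t ℓ : ℕ) (ht : 1 ≤ t) (hℓ : 1 ≤ ℓ) :
    ∃ N : ℕ, ∀ (A : Type) (_ : Fintype A), Fintype.card A = t →
      ∀ χ : (Fin N → A) → Fin ℓ,
        ∃ (IM : Finset (Fin N)) (b : Fin N → A), IM.Nonempty ∧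
          ∃ c : Fin ℓ, ∀ a : A,
            χ (fun j => if j ∈ IM then a else b j) = c := by
  obtain ⟨ι, ιfin, hι⟩ :=
    Combinatorics.Line.exists_mono_in_high_dimension (Fin t) (Fin ℓ)
  refine ⟨Fintype.card ι, fun A _ hA χ => ?_⟩
  let e : ι ≃ Fin (Fintype.card ι) := Fintype.equivFin ι
  have hcard : Fintype.card A = Fintype.card (Fin t) := by simp [hA]
  let eA : A ≃ Fin t := Fintype.equivOfCardEq hcard
  obtain ⟨l, c, hc⟩ := hι (fun x => χ (fun j => eA.symm (x (e.symm j))))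
  refine ⟨(Finset.univ.filter fun j => l.idxFun (e.symm j) = none),
    fun j => eA.symm ((l.idxFun (e.symm j)).getD ⟨0, ht⟩), ?_, c, fun a => ?_⟩
  · obtain ⟨i, hi⟩ := l.proper
    exact ⟨e i, by simp [hi]⟩
  · have := hc (eA a)
    rw [← this]
    congr 1
    funext j
    by_cases h : l.idxFun (e.symm j) = none
    · simp [h]
    · obtain ⟨x, hx⟩ := Option.ne_none_iff_exists'.mp h
      simp [h, hx]
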